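/- arXiv:2410.06976 — 8 statements merged into one kernel-verified Lean document; each statement's English description precedes it below -/
import Mathlib

section
/- Let D ≥ 1 be an integer, μ ∈ ℝ^D a nonzero vector, γ ∈ ℝ, d > 0 a real number, and h ∈ ℝ with 1 + γ(2h−1) ≠ 0. Let Z_1, …, Z_D be independent real random variables where Z_k has law gaussianReal((1 + γ(2h−1))·μ_k, 1 + γ²/d). Let w = sign(1 + γ(2h−1))·μ/‖μ‖₂. Then the probability that ∑_{k=1}^D w_k·Z_k ≥ 0 equals Φ(√(d/(d+γ²)) · |1 + γ(2h−1)| · ‖μ‖₂). This is the expected accuracy of the optimal linear classifier on positive-class nodes of CSBM(μ, −μ, d, h) under a single-layer GCN (Corollary 1). -/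
/-!
The score `∑ k, w k * Z k` is a linear combination of independent Gaussians, hence Gaussian.
With `α = 1 + γ(2h-1)` and `w = sign α • μ / ‖μ‖` a unit vector, its mean is
`∑ k, w k * α * μ k = |α| ‖μ‖` and its variance is `(∑ k, w k ^ 2) (1 + γ²/d) = 1 + γ²/d`.
Standardizing, `P(score ≥ 0) = Φ(mean / sd)`, and `(1 + γ²/d)^(-1/2) = √(d / (d + γ²))`.
-/

open MeasureTheory ProbabilityTheory

/-- The standard normal CDF `Φ(x) = ∫_{t ≤ x} (2π)^{-1/2} exp(-t²/2) dt`. -/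
noncomputable def stdNormalCDF (x : ℝ) : ℝ :=
  ∫ t in Set.Iic x, (Real.sqrt (2 * Real.pi))⁻¹ * Real.exp (-t ^ 2 / 2)

open scoped NNReal

lemma Real.sign_mul_self (r : ℝ) : Real.sign r * r = |r| := by
  rcases lt_trichotomy r 0 with hr | rfl | hr
  · rw [Real.sign_of_neg hr, abs_of_neg hr, neg_one_mul]
  · simp
  · rw [Real.sign_of_pos hr, abs_of_pos hr, one_mul]

lemma Real.sign_sq_of_ne_zero {r : ℝ} (hr : r ≠ 0) : Real.sign r ^ 2 = 1 := by
  rcases Real.sign_apply_eq_of_ne_zero r hr with h | h <;> simp [h]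

namespace EuclideanSpace

variable {n : Type*} [Fintype n] (x : EuclideanSpace ℝ n) (a : ℝ)

lemma sum_sign_mul_div_norm_sq (ha : a ≠ 0) (hx : x ≠ 0) :
    ∑ k, (Real.sign a * (x k / ‖x‖)) ^ 2 = 1 := by
  have hx' : ‖x‖ ≠ 0 := norm_ne_zero_iff.mpr hx
  simp_rw [mul_pow, div_pow, ← Finset.mul_sum, ← Finset.sum_div, ← real_norm_sq_eq,
    Real.sign_sq_of_ne_zero ha, one_mul]
  exact div_self (pow_ne_zero 2 hx')

lemma sum_sign_mul_div_norm_mul_const_mul :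
    ∑ k, Real.sign a * (x k / ‖x‖) * (a * x k) = |a| * ‖x‖ := by
  calc ∑ k, Real.sign a * (x k / ‖x‖) * (a * x k)
      = Real.sign a * a * ((∑ k, x k ^ 2) / ‖x‖) := by
        rw [Finset.sum_div, Finset.mul_sum]; congr 1 with k; ring
    _ = |a| * ‖x‖ := by
        rw [Real.sign_mul_self, ← real_norm_sq_eq]
        rcases eq_or_ne ‖x‖ 0 with h | h
        · simp [h]
        · field_simp

end EuclideanSpace

namespace ProbabilityTheory

variable {Ω ι : Type*} [MeasurableSpace Ω] {P : Measure Ω} [IsProbabilityMeasure P]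
  {X : ι → Ω → ℝ} {m : ι → ℝ} {v : ι → ℝ≥0}

lemma iIndepFun.map_fun_finsetSum_eq_gaussianReal (hX : ∀ i, Measurable (X i))
    (hindep : iIndepFun X P) (hlaw : ∀ i, P.map (X i) = gaussianReal (m i) (v i))
    (s : Finset ι) :
    P.map (fun ω ↦ ∑ i ∈ s, X i ω) = gaussianReal (∑ i ∈ s, m i) (∑ i ∈ s, v i) := by
  classical
  induction s using Finset.cons_induction with
  | empty => simp [gaussianReal_zero_var]
  | cons i s hi ih =>
    have hsum : (fun ω ↦ ∑ j ∈ Finset.cons i s hi, X j ω) = X i + ∑ j ∈ s, X j := by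
      ext ω; rw [Finset.sum_cons]; simp [Finset.sum_apply]
    rw [hsum, Finset.sum_cons, Finset.sum_cons]
    refine gaussianReal_add_gaussianReal_of_indepFun
      (hindep.indepFun_finsetSum_of_notMem hX hi).symm (hlaw i) ?_
    simpa only [Finset.sum_fn] using ih

lemma iIndepFun.map_fun_sum_mul_eq_gaussianReal [Fintype ι] (hX : ∀ i, Measurable (X i))
    (hindep : iIndepFun X P) (hlaw : ∀ i, P.map (X i) = gaussianReal (m i) (v i)) (c : ι → ℝ) :
    P.map (fun ω ↦ ∑ i, c i * X i ω) =
      gaussianReal (∑ i, c i * m i) (∑ i, .mk (c i ^ 2) (sq_nonneg _) * v i) :=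
  (hindep.comp (fun i x ↦ c i * x) fun _ ↦ by fun_prop).map_fun_finsetSum_eq_gaussianReal
    (fun i ↦ (hX i).const_mul _)
    (fun i ↦ (gaussianReal_const_mul ⟨(hX i).aemeasurable, hlaw i⟩ (c i)).map_eq) _

lemma gaussianReal_map_const_sub_div_sqrt (m : ℝ) {v : ℝ≥0} (hv : v ≠ 0) :
    (gaussianReal m v).map (fun x ↦ (m - x) / √v) = gaussianReal 0 1 := by
  have hsq : NNReal.mk (√v ^ 2) (sq_nonneg _) = v := by ext; simp
  rw [show (fun x ↦ (m - x) / √v) = (· / √v) ∘ (m - ·) from rfl,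
    ← Measure.map_map (by fun_prop) (by fun_prop), gaussianReal_map_const_sub,
    gaussianReal_map_div_const, hsq, sub_self, zero_div, div_self hv]

lemma stdNormalCDF_eq_gaussianReal_Iic (y : ℝ) :
    stdNormalCDF y = (gaussianReal 0 1 (Set.Iic y)).toReal := by
  rw [gaussianReal_apply_eq_integral _ one_ne_zero,
    ENNReal.toReal_ofReal
      (setIntegral_nonneg measurableSet_Iic fun x _ ↦ gaussianPDFReal_nonneg _ _ _)]
  simp [stdNormalCDF, gaussianPDFReal]

lemma gaussianReal_Ici_zero_toReal (m : ℝ) {v : ℝ≥0} (hv : v ≠ 0) :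
    (gaussianReal m v (Set.Ici 0)).toReal = stdNormalCDF (m / √v) := by
  have hsqrt : 0 < √(v : ℝ) := Real.sqrt_pos.mpr (by positivity)
  have hpre : (fun x ↦ (m - x) / √v) ⁻¹' Set.Iic (m / √v) = Set.Ici 0 := by
    ext x; simp [div_le_div_iff_of_pos_right hsqrt]
  rw [stdNormalCDF_eq_gaussianReal_Iic, ← gaussianReal_map_const_sub_div_sqrt m hv,
    Measure.map_apply (by fun_prop) measurableSet_Iic, hpre]

end ProbabilityTheory

theorem csbm_gcn_optimal_classifier_accuracy_general
    {Ω : Type*} [MeasurableSpace Ω] (P : Measure Ω) [IsProbabilityMeasure P]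
    (D : ℕ) (μ : EuclideanSpace ℝ (Fin D)) (hμ : μ ≠ 0)
    (γ d h : ℝ) (hd : 0 < d) (hγh : 1 + γ * (2 * h - 1) ≠ 0)
    (Z : Fin D → Ω → ℝ) (hmeas : ∀ k, Measurable (Z k))
    (hindep : iIndepFun Z P)
    (hlaw : ∀ k, Measure.map (Z k) P =
      gaussianReal ((1 + γ * (2 * h - 1)) * μ k) (Real.toNNReal (1 + γ ^ 2 / d))) :
    (P {ω | 0 ≤ ∑ k, (Real.sign (1 + γ * (2 * h - 1)) * (μ k / ‖μ‖)) * Z k ω}).toReal =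
      stdNormalCDF (Real.sqrt (d / (d + γ ^ 2)) * |1 + γ * (2 * h - 1)| * ‖μ‖) := by
  set α := 1 + γ * (2 * h - 1)
  set w : Fin D → ℝ := fun k ↦ Real.sign α * (μ k / ‖μ‖)
  set v := Real.toNNReal (1 + γ ^ 2 / d)
  have hv_pos : (0 : ℝ) < 1 + γ ^ 2 / d := by positivity
  have hv : v ≠ 0 := (Real.toNNReal_pos.mpr hv_pos).ne'
  have hlaw_sum : P.map (fun ω ↦ ∑ k, w k * Z k ω) = gaussianReal (|α| * ‖μ‖) v := by
    rw [hindep.map_fun_sum_mul_eq_gaussianReal hmeas hlaw w,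
      EuclideanSpace.sum_sign_mul_div_norm_mul_const_mul]
    congr 1
    rw [← Finset.sum_mul]
    ext
    simp only [NNReal.coe_mul, NNReal.coe_sum, NNReal.coe_mk]
    rw [EuclideanSpace.sum_sign_mul_div_norm_sq μ α hγh hμ, one_mul]
  have hsqrt_v : √(v : ℝ) = (√(d / (d + γ ^ 2)))⁻¹ := by
    rw [Real.coe_toNNReal _ hv_pos.le, ← Real.sqrt_inv, inv_div]
    congr 1
    field_simp
  rw [show {ω | 0 ≤ ∑ k, w k * Z k ω} = (fun ω ↦ ∑ k, w k * Z k ω) ⁻¹' Set.Ici 0 from rfl,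
    ← Measure.map_apply (by fun_prop) measurableSet_Ici, hlaw_sum,
    gaussianReal_Ici_zero_toReal _ hv, hsqrt_v, div_inv_eq_mul, mul_comm, mul_assoc]

/-- **Corollary 1 (expected accuracy of the optimal linear classifier).**
If `Z k ~ gaussianReal ((1 + γ(2h-1)) μ k) (1 + γ²/d)` independently, and
`w = sign(1 + γ(2h-1)) · μ / ‖μ‖`, then
`P(∑ k, w k * Z k ≥ 0) = Φ(√(d/(d+γ²)) · |1 + γ(2h-1)| · ‖μ‖)`. -/
theorem csbm_gcn_optimal_classifier_accuracy
    {Ω : Type*} [MeasurableSpace Ω] (P : Measure Ω) [IsProbabilityMeasure P]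
    (D : ℕ) (hD : 1 ≤ D) (μ : EuclideanSpace ℝ (Fin D)) (hμ : μ ≠ 0)
    (γ d h : ℝ) (hd : 0 < d) (hγh : 1 + γ * (2 * h - 1) ≠ 0)
    (Z : Fin D → Ω → ℝ) (hmeas : ∀ k, Measurable (Z k))
    (hindep : iIndepFun Z P)
    (hlaw : ∀ k, Measure.map (Z k) P =
      gaussianReal ((1 + γ * (2 * h - 1)) * μ k) (Real.toNNReal (1 + γ ^ 2 / d))) :
    (P {ω | 0 ≤ ∑ k, (Real.sign (1 + γ * (2 * h - 1)) * (μ k / ‖μ‖)) * Z k ω}).toReal =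
      stdNormalCDF (Real.sqrt (d / (d + γ ^ 2)) * |1 + γ * (2 * h - 1)| * ‖μ‖) :=
  csbm_gcn_optimal_classifier_accuracy_general P D μ hμ γ d h hd hγh Z hmeas hindep hlaw
end

section
/- For all real numbers x₀ and Δx with x₀ > 0 and 0 < Δx ≤ x₀, the quantity Φ(x₀) − (1/2)·(Φ(x₀+Δx) + Φ(x₀−Δx)) is at most Δx²/(2·√(2πe)). (This is the upper bound of order ‖Δμ‖² on the classifier bias Δ_g under attribute shifts in Proposition 2.) -/
/-!
Write `Φ(x₀) - ½(Φ(x₀+Δx) + Φ(x₀-Δx))` as `½ ∫_{x₀-Δx}^{x₀} (φ t - φ (t+Δx)) dt`, where `φ = Φ'` is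
the Gaussian density. Since `|φ'(t)| = |t| φ(t)` is maximal at `|t| = 1`, the density is Lipschitz
with constant `φ(1) = 1/√(2πe)`, so the integrand is at most `Δx/√(2πe)` and the integral at most
`Δx²/√(2πe)`.
-/

open MeasureTheory

open Real Set
open scoped NNReal

section MidpointDefect

variable {f : ℝ → ℝ}

theorem integral_Iic_midpoint_defect_eq (hf : Integrable f) (x h : ℝ) :
    (∫ t in Iic x, f t) - (1 / 2) * ((∫ t in Iic (x + h), f t) + ∫ t in Iic (x - h), f t) =
      (1 / 2) * ∫ t in (x - h)..x, (f t - f (t + h)) := by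
  have hF : ∀ a b, (∫ t in Iic b, f t) - ∫ t in Iic a, f t = ∫ t in a..b, f t := fun a b =>
    intervalIntegral.integral_Iic_sub_Iic hf.integrableOn hf.integrableOn
  have hshift : ∫ t in (x - h)..x, f (t + h) = ∫ t in x..(x + h), f t := by
    rw [intervalIntegral.integral_comp_add_right, sub_add_cancel]
  rw [intervalIntegral.integral_sub hf.intervalIntegrable (hf.comp_add_right h).intervalIntegrable,
    hshift, ← hF, ← hF]
  ring

theorem integral_Iic_midpoint_defect_le {K : ℝ≥0} (hf : Integrable f) (hK : LipschitzWith K f)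
    (x h : ℝ) :
    (∫ t in Iic x, f t) - (1 / 2) * ((∫ t in Iic (x + h), f t) + ∫ t in Iic (x - h), f t) ≤
      K * h ^ 2 / 2 := by
  have hpt : ∀ t, ‖f t - f (t + h)‖ ≤ K * |h| := fun t => by
    simpa [Real.dist_eq] using hK.dist_le_mul t (t + h)
  have hint := intervalIntegral.norm_integral_le_of_norm_le_const (a := x - h) (b := x)
    fun t _ => hpt t
  rw [sub_sub_cancel, mul_assoc, abs_mul_abs_self, ← sq, Real.norm_eq_abs] at hint
  rw [integral_Iic_midpoint_defect_eq hf]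
  linarith [le_abs_self (∫ t in (x - h)..x, (f t - f (t + h)))]

end MidpointDefect

noncomputable def stdNormalPDF (t : ℝ) : ℝ := (√(2 * π))⁻¹ * exp (-t ^ 2 / 2)

theorem integrable_stdNormalPDF : Integrable stdNormalPDF := by
  refine ((integrable_exp_neg_mul_sq one_half_pos).const_mul (√(2 * π))⁻¹).congr
    (ae_of_all _ fun t => ?_)
  rw [stdNormalPDF]
  ring_nf

theorem hasDerivAt_stdNormalPDF (t : ℝ) : HasDerivAt stdNormalPDF (-t * stdNormalPDF t) t := by
  have h : HasDerivAt (fun s : ℝ => -s ^ 2 / 2) (-t) t :=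
    ((hasDerivAt_pow 2 t).neg.div_const 2).congr_deriv (by push_cast; ring)
  refine (h.exp.const_mul (√(2 * π))⁻¹).congr_deriv ?_
  rw [stdNormalPDF]
  ring

theorem abs_mul_exp_neg_sq_div_two_le (t : ℝ) : |t| * exp (-t ^ 2 / 2) ≤ exp (-(1 / 2)) := by
  -- `|t| ≤ (t² + 1)/2 ≤ exp ((t² - 1)/2)`
  have hle : |t| ≤ exp ((t ^ 2 - 1) / 2) := by
    nlinarith [add_one_le_exp ((t ^ 2 - 1) / 2), sq_abs t, sq_nonneg (|t| - 1)]
  calc |t| * exp (-t ^ 2 / 2) ≤ exp ((t ^ 2 - 1) / 2) * exp (-t ^ 2 / 2) := by gcongr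
    _ = exp (-(1 / 2)) := by rw [← exp_add]; ring_nf

theorem sqrt_two_mul_pi_mul_exp_one : √(2 * π * exp 1) = √(2 * π) * exp (1 / 2) := by
  rw [sqrt_mul (by positivity), exp_half]

theorem abs_deriv_stdNormalPDF_le (t : ℝ) : |-t * stdNormalPDF t| ≤ (√(2 * π * exp 1))⁻¹ := by
  rw [sqrt_two_mul_pi_mul_exp_one, mul_inv, ← exp_neg, stdNormalPDF, abs_mul, abs_neg,
    abs_of_nonneg (by positivity : 0 ≤ (√(2 * π))⁻¹ * exp (-t ^ 2 / 2)), mul_left_comm]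
  gcongr
  exact abs_mul_exp_neg_sq_div_two_le t

theorem lipschitzWith_stdNormalPDF :
    LipschitzWith (√(2 * π * exp 1))⁻¹.toNNReal stdNormalPDF := by
  refine lipschitzWith_of_nnnorm_deriv_le (fun t => (hasDerivAt_stdNormalPDF t).differentiableAt)
    fun t => ?_
  rw [← NNReal.coe_le_coe, coe_nnnorm, (hasDerivAt_stdNormalPDF t).deriv,
    Real.coe_toNNReal _ (by positivity)]
  exact abs_deriv_stdNormalPDF_le t

theorem classifier_bias_upper_bound_general (x₀ Δx : ℝ) :
    stdNormalCDF x₀ - (1 / 2) * (stdNormalCDF (x₀ + Δx) + stdNormalCDF (x₀ - Δx)) ≤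
      Δx ^ 2 / (2 * Real.sqrt (2 * Real.pi * Real.exp 1)) := by
  refine (integral_Iic_midpoint_defect_le integrable_stdNormalPDF lipschitzWith_stdNormalPDF
    x₀ Δx).trans_eq ?_
  rw [Real.coe_toNNReal _ (by positivity)]
  ring

/-- **Proposition 2, upper bound on the classifier bias.**
For `x₀ > 0` and `0 < Δx ≤ x₀`,
`Φ(x₀) - ½(Φ(x₀+Δx) + Φ(x₀-Δx)) ≤ Δx² / (2√(2πe))`. -/
theorem classifier_bias_upper_bound (x₀ Δx : ℝ) (hx₀ : 0 < x₀) (hΔ : 0 < Δx) (hΔle : Δx ≤ x₀) :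
    stdNormalCDF x₀ - (1 / 2) * (stdNormalCDF (x₀ + Δx) + stdNormalCDF (x₀ - Δx)) ≤
      Δx ^ 2 / (2 * Real.sqrt (2 * Real.pi * Real.exp 1)) :=
  classifier_bias_upper_bound_general x₀ Δx
end

section
/- For every d > 0, h ∈ (1/2, 1], m > 0, and every γ ∈ ℝ: Φ(√(d/(d+γ²)) · |1 + γ(2h−1)| · m) ≤ Φ(√(1 + (2h−1)²·d) · m), with equality if and only if γ = (2h−1)·d. In words: over all choices of the hop-aggregation parameter γ, the expected accuracy of a single-layer GCN on CSBM(μ, −μ, d, h) with ‖μ‖₂ = m is maximized exactly at γ = d(2h−1), where it equals Φ(√(1+(2h−1)²d)·m). (Optimality part of Proposition 4 and Lemma on the optimal γ.) -/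
open MeasureTheory

lemma gaussian_integrable :
    Integrable (fun t : ℝ => (Real.sqrt (2 * Real.pi))⁻¹ * Real.exp (-t ^ 2 / 2)) := by
  have h : Integrable (fun t : ℝ => Real.exp (-(1/2 : ℝ) * t ^ 2)) :=
    integrable_exp_neg_mul_sq (by norm_num)
  have := h.const_mul (Real.sqrt (2 * Real.pi))⁻¹
  convert this using 2 with t
  ring_nf

lemma stdNormalCDF_strictMono : StrictMono stdNormalCDF := by
  intro x y hxy
  have hint := gaussian_integrable
  have hsub := intervalIntegral.integral_Iic_sub_Iic (μ := volume) hint.integrableOn hint.integrableOn (a := x) (b := y)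
  have hpos : 0 < ∫ t in x..y, (Real.sqrt (2 * Real.pi))⁻¹ * Real.exp (-t ^ 2 / 2) := by
    apply intervalIntegral.intervalIntegral_pos_of_pos hint.intervalIntegrable _ hxy
    intro t
    positivity
  have : stdNormalCDF y - stdNormalCDF x > 0 := by
    unfold stdNormalCDF
    rw [hsub]; exact hpos
  linarith

/-- **Optimality of the hop-aggregation parameter (Proposition 4 / optimal-γ Lemma).**
For `d > 0`, `h ∈ (1/2, 1]`, `m > 0`, and every `γ`:
`Φ(√(d/(d+γ²))·|1+γ(2h-1)|·m) ≤ Φ(√(1+(2h-1)²d)·m)`, with equality iff `γ = (2h-1)d`. -/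
theorem optimal_gamma_maximizes_accuracy (d h m : ℝ) (hd : 0 < d)
    (hh1 : 1 / 2 < h) (hh2 : h ≤ 1) (hm : 0 < m) (γ : ℝ) :
    stdNormalCDF (Real.sqrt (d / (d + γ ^ 2)) * |1 + γ * (2 * h - 1)| * m) ≤
        stdNormalCDF (Real.sqrt (1 + (2 * h - 1) ^ 2 * d) * m) ∧
      (stdNormalCDF (Real.sqrt (d / (d + γ ^ 2)) * |1 + γ * (2 * h - 1)| * m) =
          stdNormalCDF (Real.sqrt (1 + (2 * h - 1) ^ 2 * d) * m) ↔
        γ = (2 * h - 1) * d) := by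
  set c : ℝ := 2 * h - 1 with hc
  have hdγ : 0 < d + γ ^ 2 := by positivity
  -- rewrite the LHS argument as a single sqrt
  have habs : |1 + γ * c| = Real.sqrt ((1 + γ * c) ^ 2) := (Real.sqrt_sq_eq_abs _).symm
  have hA : Real.sqrt (d / (d + γ ^ 2)) * |1 + γ * c| =
      Real.sqrt (d * (1 + γ * c) ^ 2 / (d + γ ^ 2)) := by
    rw [habs, ← Real.sqrt_mul (by positivity)]
    ring_nf
  have hkey : (1 + c ^ 2 * d) * (d + γ ^ 2) - d * (1 + γ * c) ^ 2 = (γ - c * d) ^ 2 := by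
    ring
  -- argument inequality
  have harg : d * (1 + γ * c) ^ 2 / (d + γ ^ 2) ≤ 1 + c ^ 2 * d := by
    rw [div_le_iff₀ hdγ]
    nlinarith [sq_nonneg (γ - c * d)]
  have hAle : Real.sqrt (d / (d + γ ^ 2)) * |1 + γ * c| * m ≤
      Real.sqrt (1 + c ^ 2 * d) * m := by
    rw [hA]
    exact mul_le_mul_of_nonneg_right (Real.sqrt_le_sqrt harg) hm.le
  constructor
  · rcases lt_or_eq_of_le hAle with hlt | heq
    · exact (stdNormalCDF_strictMono hlt).le
    · rw [heq]
  · constructor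
    · intro heq
      by_contra hne
      -- strict inequality on arguments
      have hstrict : d * (1 + γ * c) ^ 2 / (d + γ ^ 2) < 1 + c ^ 2 * d := by
        rw [div_lt_iff₀ hdγ]
        have : (γ - c * d) ^ 2 > 0 :=
          pow_two_pos_of_ne_zero (sub_ne_zero.mpr hne)
        nlinarith
      have hlt : Real.sqrt (d / (d + γ ^ 2)) * |1 + γ * c| * m <
          Real.sqrt (1 + c ^ 2 * d) * m := by
        rw [hA]
        apply mul_lt_mul_of_pos_right _ hm
        exact Real.sqrt_lt_sqrt (by positivity) hstrict
      exact absurd heq (ne_of_lt (stdNormalCDF_strictMono hlt))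
    · intro hγ
      have : d * (1 + γ * c) ^ 2 / (d + γ ^ 2) = 1 + c ^ 2 * d := by
        rw [div_eq_iff (ne_of_gt hdγ), hγ]
        ring
      rw [hA, this]
end

section
/- Let E and H be real Hilbert spaces, M : E →L[ℝ] H a nonzero continuous linear map, and f : H → ℝ a nonnegative differentiable function whose gradient is β-Lipschitz for some β > 0. Let L ≥ 0 and let ĝ : E → E satisfy ‖ĝ(γ) − ∇(f ∘ M)(γ)‖ ≤ L·‖M‖ for all γ ∈ E, where ‖M‖ is the operator norm. Define the iterates γ^{(t+1)} = γ^{(t)} − η·ĝ(γ^{(t)}) with step size η = 1/(β‖M‖²) from any initialization γ^{(0)}. Then for every integer T ≥ 1: (1/T)·∑_{t=0}^{T−1} ‖∇(f ∘ M)(γ^{(t)})‖² ≤ (2β‖M‖²/T)·f(M γ^{(0)}) + L²·‖M‖². (Theorem 1, convergence of AdaRC: the adaptation of hop-aggregation parameters converges to a region of small gradient at rate 1/T with error proportional to the squared Lipschitz constant of the base TTA prediction.) -/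
/-!
With `F = f ∘ M`, the chain rule gives `∇F = M† ∘ ∇f ∘ M`, which is `C`-Lipschitz for
`C = β‖M‖²`. The descent lemma for a function with `C`-Lipschitz gradient then shows that one
step of size `1/C` along an inexact gradient `ĝ` decreases `F` by at least
`(‖∇F‖² - ‖ĝ - ∇F‖²) / 2C`. Summing these decreases telescopes, and `F ≥ 0` bounds the total
by `F(γ₀)`.
-/

open scoped NNReal InnerProductSpace

open Finset

section Gradient

variable {E H : Type*} [NormedAddCommGroup E] [InnerProductSpace ℝ E] [CompleteSpace E]
  [NormedAddCommGroup H] [InnerProductSpace ℝ H] [CompleteSpace H]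

theorem HasGradientAt.comp_continuousLinearMap {f : H → ℝ} {M : E →L[ℝ] H} {x : E} {g : H}
    (hf : HasGradientAt f g (M x)) : HasGradientAt (fun y => f (M y)) (M.adjoint g) x := by
  have hdual : InnerProductSpace.toDual ℝ E (M.adjoint g) =
      (InnerProductSpace.toDual ℝ H g).comp M := by
    ext v
    simp [ContinuousLinearMap.adjoint_inner_left]
  rw [hasGradientAt_iff_hasFDerivAt, hdual]
  exact (hasGradientAt_iff_hasFDerivAt.mp hf).comp x M.hasFDerivAt

theorem gradient_comp_continuousLinearMap {f : H → ℝ} (hf : Differentiable ℝ f) (M : E →L[ℝ] H) :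
    gradient (fun y => f (M y)) = fun y => M.adjoint (gradient f (M y)) :=
  funext fun y => (hf (M y)).hasGradientAt.comp_continuousLinearMap.gradient

theorem LipschitzWith.gradient_comp_continuousLinearMap {f : H → ℝ} {β : ℝ≥0}
    (hf : Differentiable ℝ f) (hβ : LipschitzWith β (gradient f)) (M : E →L[ℝ] H) :
    LipschitzWith (β * ‖M‖₊ ^ 2) (gradient (fun y => f (M y))) := by
  rw [_root_.gradient_comp_continuousLinearMap hf]
  have h := M.adjoint.lipschitz.comp (hβ.comp M.lipschitz)
  rwa [LinearIsometryEquiv.nnnorm_map, ← mul_assoc, mul_comm _ β, mul_assoc, ← sq] at h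

end Gradient

section Descent

variable {E : Type*} [NormedAddCommGroup E] [InnerProductSpace ℝ E] [CompleteSpace E]
  {F : E → ℝ} {g : E → E} {C : ℝ≥0}

theorem HasGradientAt.hasDerivAt_lineMap {x d : E} {s : ℝ} {v : E}
    (hF : HasGradientAt F v (x + s • d)) :
    HasDerivAt (fun s : ℝ => F (x + s • d)) ⟪v, d⟫_ℝ s := by
  have hline : HasDerivAt (fun s : ℝ => x + s • d) d s := by
    simpa using ((hasDerivAt_id s).smul_const d).const_add x
  have h := (hasGradientAt_iff_hasFDerivAt.mp hF).comp_hasDerivAt s hline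
  simp only [InnerProductSpace.toDual_apply_apply] at h
  exact h

theorem le_add_inner_add_norm_sq_of_lipschitzWith_gradient (hF : ∀ x, HasGradientAt F (g x) x)
    (hg : LipschitzWith C g) (x d : E) :
    F (x + d) ≤ F x + ⟪g x, d⟫_ℝ + C / 2 * ‖d‖ ^ 2 := by
  set ψ : ℝ → ℝ := fun s => F (x + s • d) - s * ⟪g x, d⟫_ℝ - C / 2 * s ^ 2 * ‖d‖ ^ 2
  have hψ : ∀ s, HasDerivAt ψ (⟪g (x + s • d) - g x, d⟫_ℝ - C * s * ‖d‖ ^ 2) s := by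
    intro s
    have h := (((hF (x + s • d)).hasDerivAt_lineMap (x := x) (d := d)).sub
      ((hasDerivAt_id s).mul_const ⟪g x, d⟫_ℝ)).sub
      (((hasDerivAt_pow 2 s).const_mul ((C : ℝ) / 2)).mul_const (‖d‖ ^ 2))
    exact h.congr_deriv (by rw [inner_sub_left]; ring)
  have hψ_nonpos : ∀ s ∈ interior (Set.Icc (0 : ℝ) 1), deriv ψ s ≤ 0 := by
    intro s hs
    rw [interior_Icc] at hs
    rw [(hψ s).deriv, sub_nonpos]
    calc ⟪g (x + s • d) - g x, d⟫_ℝ ≤ ‖g (x + s • d) - g x‖ * ‖d‖ := real_inner_le_norm _ _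
      _ ≤ C * ‖(x + s • d) - x‖ * ‖d‖ := by
        gcongr
        simpa [dist_eq_norm] using hg.dist_le_mul (x + s • d) x
      _ = C * s * ‖d‖ ^ 2 := by
        rw [add_sub_cancel_left, norm_smul, Real.norm_of_nonneg hs.1.le]
        ring
  have hanti : AntitoneOn ψ (Set.Icc 0 1) :=
    antitoneOn_of_deriv_nonpos (convex_Icc 0 1)
      (fun s _ => (hψ s).continuousAt.continuousWithinAt)
      (fun s _ => (hψ s).differentiableAt.differentiableWithinAt) hψ_nonpos
  have h01 := hanti (Set.left_mem_Icc.mpr zero_le_one) (Set.right_mem_Icc.mpr zero_le_one)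
    zero_le_one
  simp only [ψ] at h01
  norm_num at h01
  linarith

theorem norm_gradient_sq_le_of_inexact_gradient_step (hF : ∀ x, HasGradientAt F (g x) x)
    (hg : LipschitzWith C g) (hC : 0 < C) (x ĝ : E) :
    ‖g x‖ ^ 2 ≤ 2 * C * (F x - F (x - (1 / (C : ℝ)) • ĝ)) + ‖ĝ - g x‖ ^ 2 := by
  have hC' : (0 : ℝ) < C := hC
  have hdesc := le_add_inner_add_norm_sq_of_lipschitzWith_gradient hF hg x (-((1 / (C : ℝ)) • ĝ))
  rw [← sub_eq_add_neg, inner_neg_right, real_inner_smul_right, norm_neg, norm_smul,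
    Real.norm_of_nonneg (by positivity)] at hdesc
  have hsq : ‖ĝ - g x‖ ^ 2 = ‖ĝ‖ ^ 2 - 2 * ⟪g x, ĝ⟫_ℝ + ‖g x‖ ^ 2 := by
    rw [norm_sub_sq_real, real_inner_comm]
  have hmul : 2 * C * (C / 2 * ((1 / C) * ‖ĝ‖) ^ 2) = ‖ĝ‖ ^ 2 := by
    field_simp
  have hmul' : 2 * C * (1 / C * ⟪g x, ĝ⟫_ℝ) = 2 * ⟪g x, ĝ⟫_ℝ := by
    field_simp
  nlinarith

end Descent

theorem sum_range_le_of_le_mul_sub_succ_add {a u : ℕ → ℝ} {c b : ℝ} (hc : 0 ≤ c)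
    (hu : ∀ t, 0 ≤ u t) (h : ∀ t, a t ≤ c * (u t - u (t + 1)) + b) (T : ℕ) :
    ∑ t ∈ range T, a t ≤ c * u 0 + T * b :=
  calc ∑ t ∈ range T, a t ≤ ∑ t ∈ range T, (c * (u t - u (t + 1)) + b) :=
        sum_le_sum fun t _ => h t
    _ = c * (u 0 - u T) + T * b := by
        rw [sum_add_distrib, ← mul_sum, sum_range_sub' u, sum_const, card_range, nsmul_eq_mul]
    _ ≤ c * u 0 + T * b := by nlinarith [mul_nonneg hc (hu T)]

theorem adarc_convergence_general
    {E H : Type*} [NormedAddCommGroup E] [InnerProductSpace ℝ E] [CompleteSpace E]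
    [NormedAddCommGroup H] [InnerProductSpace ℝ H] [CompleteSpace H]
    (M : E →L[ℝ] H) (hM : M ≠ 0)
    (f : H → ℝ) (hf0 : ∀ z, 0 ≤ f z) (hfd : Differentiable ℝ f)
    (β : ℝ≥0) (hβ : 0 < β) (hfsmooth : LipschitzWith β (gradient f))
    (L : ℝ)
    (gEst : E → E) (hgEst : ∀ γ : E, ‖gEst γ - gradient (fun γ' => f (M γ')) γ‖ ≤ L * ‖M‖)
    (γseq : ℕ → E)
    (hstep : ∀ t, γseq (t + 1) = γseq t - (1 / (β * ‖M‖ ^ 2)) • gEst (γseq t))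
    (T : ℕ) :
    (1 / T : ℝ) * ∑ t ∈ Finset.range T, ‖gradient (fun γ' => f (M γ')) (γseq t)‖ ^ 2 ≤
      (2 * β * ‖M‖ ^ 2 / T) * f (M (γseq 0)) + L ^ 2 * ‖M‖ ^ 2 := by
  set C : ℝ≥0 := β * ‖M‖₊ ^ 2
  have hC : 0 < C := mul_pos hβ (pow_pos (nnnorm_pos.mpr hM) 2)
  have hCcoe : (C : ℝ) = β * ‖M‖ ^ 2 := by simp [C]
  have hF : ∀ γ, HasGradientAt (fun γ' => f (M γ')) (gradient (fun γ' => f (M γ')) γ) γ :=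
    fun γ => ((hfd (M γ)).hasGradientAt.comp_continuousLinearMap).differentiableAt.hasGradientAt
  have hdecrease : ∀ t, ‖gradient (fun γ' => f (M γ')) (γseq t)‖ ^ 2 ≤
      2 * C * (f (M (γseq t)) - f (M (γseq (t + 1)))) + L ^ 2 * ‖M‖ ^ 2 := by
    intro t
    have h := norm_gradient_sq_le_of_inexact_gradient_step hF
      (hfsmooth.gradient_comp_continuousLinearMap hfd M) hC (γseq t) (gEst (γseq t))
    rw [hCcoe, ← hstep] at h
    have herr := pow_le_pow_left₀ (norm_nonneg _) (hgEst (γseq t)) 2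
    rw [hCcoe]
    linarith [mul_pow L ‖M‖ 2]
  have hsum := sum_range_le_of_le_mul_sub_succ_add (by positivity) (fun t => hf0 (M (γseq t)))
    hdecrease T
  calc (1 / T : ℝ) * ∑ t ∈ Finset.range T, ‖gradient (fun γ' => f (M γ')) (γseq t)‖ ^ 2
      ≤ (1 / T) * (2 * C * f (M (γseq 0)) + T * (L ^ 2 * ‖M‖ ^ 2)) := by gcongr
    _ = (2 * β * ‖M‖ ^ 2 / T) * f (M (γseq 0)) + (T / T) * (L ^ 2 * ‖M‖ ^ 2) := by
      rw [hCcoe]; ring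
    _ ≤ (2 * β * ‖M‖ ^ 2 / T) * f (M (γseq 0)) + L ^ 2 * ‖M‖ ^ 2 := by
      grw [div_self_le_one, one_mul]

/-- **Theorem 1 (convergence of AdaRC).**
Gradient descent on `f ∘ M` with step size `1/(β‖M‖²)` and gradient oracle whose error is at
most `L‖M‖` satisfies
`(1/T)·∑_{t<T} ‖∇(f∘M)(γ_t)‖² ≤ (2β‖M‖²/T)·f(Mγ₀) + L²‖M‖²`. -/
theorem adarc_convergence
    {E H : Type*} [NormedAddCommGroup E] [InnerProductSpace ℝ E] [CompleteSpace E]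
    [NormedAddCommGroup H] [InnerProductSpace ℝ H] [CompleteSpace H]
    (M : E →L[ℝ] H) (hM : M ≠ 0)
    (f : H → ℝ) (hf0 : ∀ z, 0 ≤ f z) (hfd : Differentiable ℝ f)
    (β : ℝ≥0) (hβ : 0 < β) (hfsmooth : LipschitzWith β (gradient f))
    (L : ℝ) (hL : 0 ≤ L)
    (gEst : E → E) (hgEst : ∀ γ : E, ‖gEst γ - gradient (fun γ' => f (M γ')) γ‖ ≤ L * ‖M‖)
    (γseq : ℕ → E)
    (hstep : ∀ t, γseq (t + 1) = γseq t - (1 / (β * ‖M‖ ^ 2)) • gEst (γseq t))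
    (T : ℕ) (hT : 1 ≤ T) :
    (1 / T : ℝ) * ∑ t ∈ Finset.range T, ‖gradient (fun γ' => f (M γ')) (γseq t)‖ ^ 2 ≤
      (2 * β * ‖M‖ ^ 2 / T) * f (M (γseq 0)) + L ^ 2 * ‖M‖ ^ 2 :=
  adarc_convergence_general M hM f hf0 hfd β hβ hfsmooth L gEst hgEst γseq hstep T
end

section
/- Let d > 0 and h ∈ (1/2, 1]. For every γ ∈ ℝ: (d/(d+γ²))·(1 + γ(2h−1))² ≤ 1 + (2h−1)²·d, with equality if and only if γ = (2h−1)·d. (Lemma on the optimal hop-aggregation parameter: the function F(γ) = d(1+γ(2h−1))²/(d+γ²) attains its global maximum 1+(2h−1)²d uniquely at γ = (2h−1)d, so the accuracy-maximizing γ for a single-layer GCN on CSBM(μ, −μ, d, h) is d(2h−1).) -/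
/-- **Optimal hop-aggregation parameter Lemma.**
For `d > 0` and `h ∈ (1/2, 1]`, for every `γ`:
`(d/(d+γ²))·(1+γ(2h-1))² ≤ 1 + (2h-1)²·d`, with equality iff `γ = (2h-1)·d`. -/
theorem gamma_objective_max (d h : ℝ) (hd : 0 < d) (hh1 : 1 / 2 < h) (hh2 : h ≤ 1) (γ : ℝ) :
    d / (d + γ ^ 2) * (1 + γ * (2 * h - 1)) ^ 2 ≤ 1 + (2 * h - 1) ^ 2 * d ∧
      (d / (d + γ ^ 2) * (1 + γ * (2 * h - 1)) ^ 2 = 1 + (2 * h - 1) ^ 2 * d ↔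
        γ = (2 * h - 1) * d) := by
  have hpos : 0 < d + γ ^ 2 := by positivity
  have hkey : (1 + (2 * h - 1) ^ 2 * d) * (d + γ ^ 2)
      - d * (1 + γ * (2 * h - 1)) ^ 2 = (γ - (2 * h - 1) * d) ^ 2 := by ring
  constructor
  · rw [div_mul_eq_mul_div, div_le_iff₀ hpos]
    nlinarith [sq_nonneg (γ - (2 * h - 1) * d)]
  · rw [div_mul_eq_mul_div, div_eq_iff (ne_of_gt hpos)]
    constructor
    · intro heq
      have : (γ - (2 * h - 1) * d) ^ 2 = 0 := by nlinarith
      have := pow_eq_zero_iff (n := 2) (by norm_num) |>.mp this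
      linarith
    · intro hg; subst hg; ring
end

section
/- Let E be a real Hilbert space, f : E → ℝ a nonnegative differentiable function whose gradient ∇f is β-Lipschitz for some β > 0, and ĝ : E → E a map satisfying ‖ĝ(w) − ∇f(w)‖ ≤ Δ for all w ∈ E. Define iterates w^{(t+1)} = w^{(t)} − (1/β)·ĝ(w^{(t)}) from any initialization w^{(0)}. Then for every integer T ≥ 1: (1/T)·∑_{t=0}^{T−1} ‖∇f(w^{(t)})‖² ≤ (2β/T)·f(w^{(0)}) + Δ². (Convergence of SGD with uniformly bounded gradient noise on a smooth nonnegative loss.) -/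
open scoped NNReal RealInnerProductSpace

/-!
The descent lemma at `x = w t` in the direction `-β⁻¹ • ĝ(w t)`, combined with
`‖ĝ - ∇f‖² = ‖ĝ‖² - 2⟪∇f, ĝ⟫ + ‖∇f‖²`, gives
`‖∇f(w t)‖² ≤ 2β (f(w t) - f(w (t+1))) + Δ²`. Summing over `t < T` telescopes, and `f ≥ 0`
lets us drop `f(w T)`.
-/

section Smooth

variable {E : Type*} [NormedAddCommGroup E] [InnerProductSpace ℝ E] [CompleteSpace E]
  {f : E → ℝ} {β : ℝ≥0}

theorem hasDerivAt_comp_add_smul (hfd : Differentiable ℝ f) (x v : E) (t : ℝ) :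
    HasDerivAt (fun s : ℝ => f (x + s • v)) ⟪gradient f (x + t • v), v⟫ t := by
  have hline : HasDerivAt (fun s : ℝ => x + s • v) v t := by
    simpa using ((hasDerivAt_id t).smul_const v).const_add x
  exact (hfd _).hasGradientAt.hasFDerivAt.comp_hasDerivAt t hline

theorem LipschitzWith.inner_gradient_add_smul_sub_le (hlip : LipschitzWith β (gradient f))
    (x v : E) {t : ℝ} (ht : 0 ≤ t) :
    ⟪gradient f (x + t • v) - gradient f x, v⟫ ≤ β * t * ‖v‖ ^ 2 := by
  have hdist : ‖gradient f (x + t • v) - gradient f x‖ ≤ β * (t * ‖v‖) := by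
    simpa [← dist_eq_norm, norm_smul, abs_of_nonneg ht] using hlip.dist_le_mul (x + t • v) x
  calc ⟪gradient f (x + t • v) - gradient f x, v⟫
      ≤ ‖gradient f (x + t • v) - gradient f x‖ * ‖v‖ := real_inner_le_norm _ _
    _ ≤ β * (t * ‖v‖) * ‖v‖ := by gcongr
    _ = β * t * ‖v‖ ^ 2 := by ring

theorem image_add_le_of_lipschitzWith_gradient (hfd : Differentiable ℝ f)
    (hlip : LipschitzWith β (gradient f)) (x v : E) :
    f (x + v) ≤ f x + ⟪gradient f x, v⟫ + β / 2 * ‖v‖ ^ 2 := by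
  have hB (t : ℝ) :
      HasDerivAt (fun s : ℝ => f x + s * ⟪gradient f x, v⟫ + β / 2 * ‖v‖ ^ 2 * s ^ 2)
      (⟪gradient f x, v⟫ + β * t * ‖v‖ ^ 2) t := by
    have hlin := (hasDerivAt_id' t).mul_const ⟪gradient f x, v⟫
    have hquad := (hasDerivAt_pow 2 t).const_mul ((β : ℝ) / 2 * ‖v‖ ^ 2)
    exact ((hlin.const_add (f x)).fun_add hquad).congr_deriv (by push_cast; ring)
  -- `t ↦ f (x + t • v)` stays below its quadratic model on `[0, 1]` since its slope does.
  have := image_le_of_deriv_right_le_deriv_boundary (a := 0) (b := 1)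
    (fun t _ => (hasDerivAt_comp_add_smul hfd x v t).continuousAt.continuousWithinAt)
    (fun t _ => (hasDerivAt_comp_add_smul hfd x v t).hasDerivWithinAt)
    (by simp) (fun t _ => (hB t).continuousAt.continuousWithinAt)
    (fun t _ => (hB t).hasDerivWithinAt)
    (fun t ht => by
      have := hlip.inner_gradient_add_smul_sub_le x v ht.1
      rw [inner_sub_left] at this
      linarith)
    (Set.right_mem_Icc.2 zero_le_one)
  simpa using this

theorem sq_norm_gradient_le_of_sub_inv_smul (hfd : Differentiable ℝ f)
    (hlip : LipschitzWith β (gradient f)) (hβ : 0 < β) (x g : E) :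
    ‖gradient f x‖ ^ 2 ≤ 2 * β * (f x - f (x - (β : ℝ)⁻¹ • g)) + ‖g - gradient f x‖ ^ 2 := by
  have hβ' : (0 : ℝ) < β := hβ
  have hdesc := image_add_le_of_lipschitzWith_gradient hfd hlip x (-((β : ℝ)⁻¹ • g))
  rw [← sub_eq_add_neg, inner_neg_right, real_inner_smul_right, norm_neg, norm_smul,
    Real.norm_of_nonneg (inv_nonneg.2 hβ'.le)] at hdesc
  have hexpand := norm_sub_sq_real g (gradient f x)
  rw [real_inner_comm] at hexpand
  have hscaled : 2 * β * f (x - (β : ℝ)⁻¹ • g) ≤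
      2 * β * f x - 2 * ⟪gradient f x, g⟫ + ‖g‖ ^ 2 := by
    calc 2 * β * f (x - (β : ℝ)⁻¹ • g)
        ≤ 2 * β * (f x + -((β : ℝ)⁻¹ * ⟪gradient f x, g⟫) + β / 2 * ((β : ℝ)⁻¹ * ‖g‖) ^ 2) := by
          gcongr
      _ = 2 * β * f x - 2 * ⟪gradient f x, g⟫ + ‖g‖ ^ 2 := by
          field_simp
          ring
  linarith

end Smooth

theorem Finset.sum_range_le_of_le_sub_add {α : Type*} [AddCommGroup α] [PartialOrder α]
    [IsOrderedAddMonoid α] {a c : ℕ → α} {d : α} (h : ∀ t, a t ≤ c t - c (t + 1) + d) (T : ℕ) :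
    ∑ t ∈ Finset.range T, a t ≤ c 0 - c T + T • d := by
  calc ∑ t ∈ Finset.range T, a t ≤ ∑ t ∈ Finset.range T, (c t - c (t + 1) + d) :=
        Finset.sum_le_sum fun t _ => h t
    _ = c 0 - c T + T • d := by
        rw [Finset.sum_add_distrib, Finset.sum_range_sub', Finset.sum_const, Finset.card_range]

theorem noisy_gd_convergence_general
    {E : Type*} [NormedAddCommGroup E] [InnerProductSpace ℝ E] [CompleteSpace E]
    (f : E → ℝ) (hf0 : ∀ w, 0 ≤ f w) (hfd : Differentiable ℝ f)
    (β : ℝ≥0) (hβ : 0 < β) (hfsmooth : LipschitzWith β (gradient f))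
    (Δ : ℝ) (gEst : E → E) (hgEst : ∀ w : E, ‖gEst w - gradient f w‖ ≤ Δ)
    (wseq : ℕ → E)
    (hstep : ∀ t, wseq (t + 1) = wseq t - (1 / (β : ℝ)) • gEst (wseq t))
    (T : ℕ) :
    (1 / T : ℝ) * ∑ t ∈ Finset.range T, ‖gradient f (wseq t)‖ ^ 2 ≤
      (2 * β / T) * f (wseq 0) + Δ ^ 2 := by
  have hstep_le (t : ℕ) : ‖gradient f (wseq t)‖ ^ 2 ≤
      2 * β * f (wseq t) - 2 * β * f (wseq (t + 1)) + Δ ^ 2 := by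
    have hnoise : ‖gEst (wseq t) - gradient f (wseq t)‖ ^ 2 ≤ Δ ^ 2 :=
      pow_le_pow_left₀ (norm_nonneg _) (hgEst _) 2
    have := sq_norm_gradient_le_of_sub_inv_smul hfd hfsmooth hβ (wseq t) (gEst (wseq t))
    rw [hstep, one_div]
    linarith
  have hsum := Finset.sum_range_le_of_le_sub_add hstep_le T
  rw [nsmul_eq_mul] at hsum
  obtain rfl | hT := T.eq_zero_or_pos
  · simpa using sq_nonneg Δ -- `1 / 0 = 0` in Lean
  have hT' : (0 : ℝ) < T := Nat.cast_pos.2 hT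
  have hfT : 0 ≤ 2 * β * f (wseq T) := by have := hf0 (wseq T); positivity
  rw [one_div_mul_eq_div, div_le_iff₀ hT']
  calc ∑ t ∈ Finset.range T, ‖gradient f (wseq t)‖ ^ 2
      ≤ 2 * β * f (wseq 0) + T * Δ ^ 2 := by linarith
    _ = (2 * β / T * f (wseq 0) + Δ ^ 2) * T := by field_simp

/-- **Convergence of SGD with uniformly bounded gradient noise on a smooth nonnegative loss.**
If `f ≥ 0` is differentiable with `β`-Lipschitz gradient, and `‖gEst(w) - ∇f(w)‖ ≤ Δ` everywhere,
then the iterates `w_{t+1} = w_t - (1/β)·gEst(w_t)` satisfy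
`(1/T)·∑_{t<T} ‖∇f(w_t)‖² ≤ (2β/T)·f(w₀) + Δ²`. -/
theorem noisy_gd_convergence
    {E : Type*} [NormedAddCommGroup E] [InnerProductSpace ℝ E] [CompleteSpace E]
    (f : E → ℝ) (hf0 : ∀ w, 0 ≤ f w) (hfd : Differentiable ℝ f)
    (β : ℝ≥0) (hβ : 0 < β) (hfsmooth : LipschitzWith β (gradient f))
    (Δ : ℝ) (gEst : E → E) (hgEst : ∀ w : E, ‖gEst w - gradient f w‖ ≤ Δ)
    (wseq : ℕ → E)
    (hstep : ∀ t, wseq (t + 1) = wseq t - (1 / (β : ℝ)) • gEst (wseq t))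
    (T : ℕ) (hT : 1 ≤ T) :
    (1 / T : ℝ) * ∑ t ∈ Finset.range T, ‖gradient f (wseq t)‖ ^ 2 ≤
      (2 * β / T) * f (wseq 0) + Δ ^ 2 :=
  noisy_gd_convergence_general f hf0 hfd β hβ hfsmooth Δ gEst hgEst wseq hstep T
end

section
/- Let H and Y be real Hilbert spaces, F : H → Y a differentiable map with ‖fderiv F(z)‖ ≤ L₁ (operator norm) for all z ∈ H, and ℓ : Y → H → ℝ a function such that (y, z) ↦ ℓ(y)(z) is differentiable and the gradient of y ↦ ℓ(y)(z) has norm at most L₂ for all (y, z). Then for every z ∈ H, the gradient of the composite z' ↦ ℓ(F(z'))(z') at z and the partial gradient of z' ↦ ℓ(F(z))(z') at z differ in norm by at most L₁·L₂: ‖∇(z' ↦ ℓ(F z')(z'))(z) − ∇(z' ↦ ℓ(F z)(z'))(z)‖ ≤ L₁·L₂. (Gradient estimation error of AdaRC: ignoring the back-propagation path through the base TTA prediction incurs a gradient error of at most L₁L₂.) -/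
/-!
By the chain rule, the derivative of `z' ↦ ℓ (F z') z'` at `z` is `∂₁ℓ ∘ F'(z) + ∂₂ℓ`, so dropping
the path through `F` leaves exactly `∂₁ℓ ∘ F'(z)`, of operator norm at most `L₂ · L₁`. The Riesz
isomorphism turns derivatives into gradients isometrically.
-/

open ContinuousLinearMap

section

variable {𝕜 E Y G : Type*} [NontriviallyNormedField 𝕜]
  [NormedAddCommGroup E] [NormedSpace 𝕜 E] [NormedAddCommGroup Y] [NormedSpace 𝕜 Y]
  [NormedAddCommGroup G] [NormedSpace 𝕜 G]

theorem fderiv_along_graph_sub_fderiv_snd {g : Y → E → G} {F : E → Y} {z : E}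
    (hg : DifferentiableAt 𝕜 (fun p : Y × E => g p.1 p.2) (F z, z))
    (hF : DifferentiableAt 𝕜 F z) :
    fderiv 𝕜 (fun x => g (F x) x) z - fderiv 𝕜 (fun x => g (F z) x) z =
      (fderiv 𝕜 (fun y => g y z) (F z)).comp (fderiv 𝕜 F z) := by
  set D := fderiv 𝕜 (fun p : Y × E => g p.1 p.2) (F z, z)
  have hD : HasFDerivAt (fun p : Y × E => g p.1 p.2) D (F z, z) := hg.hasFDerivAt
  have h_graph : HasFDerivAt (fun x => g (F x) x) (D.comp ((fderiv 𝕜 F z).prod (.id 𝕜 E))) z :=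
    hD.comp z (f := fun x => (F x, x)) (hF.hasFDerivAt.prodMk (hasFDerivAt_id z))
  have h_snd : HasFDerivAt (fun x => g (F z) x) (D.comp (inr 𝕜 Y E)) z :=
    hD.comp z (f := fun x => (F z, x)) (hasFDerivAt_prodMk_right (F z) z)
  have h_fst : HasFDerivAt (fun y => g y z) (D.comp (inl 𝕜 Y E)) (F z) :=
    hD.comp (F z) (f := fun y => (y, z)) (hasFDerivAt_prodMk_left (F z) z)
  rw [h_graph.fderiv, h_snd.fderiv, h_fst.fderiv]
  ext v
  -- `D (F' v, v) - D (0, v) = D (F' v, 0)`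
  simp [← map_sub]

end

section

variable {𝕜 H : Type*} [RCLike 𝕜] [NormedAddCommGroup H] [InnerProductSpace 𝕜 H]
  [CompleteSpace H] {f g : H → 𝕜} {x : H}

theorem norm_gradient : ‖gradient f x‖ = ‖fderiv 𝕜 f x‖ :=
  (InnerProductSpace.toDual 𝕜 H).symm.norm_map _

theorem norm_gradient_sub_gradient :
    ‖gradient f x - gradient g x‖ = ‖fderiv 𝕜 f x - fderiv 𝕜 g x‖ := by
  rw [gradient, gradient, ← map_sub, LinearIsometryEquiv.norm_map]

end

/-- **Gradient estimation error of AdaRC.**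
If the base TTA map `F : H → Y` has derivative of operator norm at most `L₁` everywhere, and
the loss `ℓ(y, z)` is differentiable jointly with the gradient of `y ↦ ℓ(y, z)` bounded in
norm by `L₂`, then ignoring the back-propagation path through `F` incurs a gradient error of
at most `L₁·L₂`. -/
theorem adarc_gradient_estimation_error
    {H Y : Type*} [NormedAddCommGroup H] [InnerProductSpace ℝ H] [CompleteSpace H]
    [NormedAddCommGroup Y] [InnerProductSpace ℝ Y] [CompleteSpace Y]
    (F : H → Y) (hFd : Differentiable ℝ F)
    (L₁ : ℝ) (hL₁ : ∀ z : H, ‖fderiv ℝ F z‖ ≤ L₁)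
    (ℓ : Y → H → ℝ) (hℓd : Differentiable ℝ (fun p : Y × H => ℓ p.1 p.2))
    (L₂ : ℝ) (hL₂ : ∀ (y : Y) (z : H), ‖gradient (fun y' => ℓ y' z) y‖ ≤ L₂) :
    ∀ z : H,
      ‖gradient (fun z' => ℓ (F z') z') z - gradient (fun z' => ℓ (F z) z') z‖ ≤ L₁ * L₂ := by
  intro z
  have hL₂z : ‖fderiv ℝ (fun y => ℓ y z) (F z)‖ ≤ L₂ := norm_gradient.symm.trans_le (hL₂ (F z) z)
  rw [norm_gradient_sub_gradient, fderiv_along_graph_sub_fderiv_snd (hℓd _) (hFd z)]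
  calc ‖(fderiv ℝ (fun y => ℓ y z) (F z)).comp (fderiv ℝ F z)‖
      ≤ ‖fderiv ℝ (fun y => ℓ y z) (F z)‖ * ‖fderiv ℝ F z‖ := opNorm_comp_le _ _
    _ ≤ L₂ * L₁ := mul_le_mul hL₂z (hL₁ z) (norm_nonneg _) ((norm_nonneg _).trans hL₂z)
    _ = L₁ * L₂ := mul_comm _ _
end

section
/- Let I and C be finite nonempty index types. Let p : I → C → ℝ satisfy p(i)(c) ≥ 0 for all i, c and ∑_{c} p(i)(c) = 1 for each i, and let v : I → C → ℝ satisfy v(i)(c) ≥ 0 for all i, c and ∑_{i} ∑_{c} p(i)(c)·v(i)(c) ≤ 1. Define g(i)(c) = p(i)(c)·v(i)(c) − p(i)(c)·(∑_{c'} p(i)(c')·v(i)(c')). Then the Euclidean norm satisfies √(∑_{i} ∑_{c} g(i)(c)²) ≤ 2. (Core of the Lemma showing that the PIC loss composed with a linear layer and softmax is (2‖W‖)-Lipschitz: here p(i)(c) = Ŷ_{i,c} are the softmax outputs and v(i)(c) = ‖z_i − μ_c‖²/σ², so that g is the gradient of the PIC loss with respect to the logits and ∑∑ p·v = σ²_intra/σ²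 ≤ 1.) -/
/-- **Core of the (2‖W‖)-Lipschitz Lemma for the PIC loss.**
If `p i c ≥ 0` with `∑_c p i c = 1`, `v i c ≥ 0` with `∑_i ∑_c p i c · v i c ≤ 1`, and
`g i c = p i c · v i c - p i c · ∑_{c'} p i c' · v i c'`, then `√(∑_i ∑_c (g i c)²) ≤ 2`. -/
theorem pic_loss_logit_gradient_norm_le_two
    {I C : Type*} [Fintype I] [Nonempty I] [Fintype C] [Nonempty C]
    (p v : I → C → ℝ)
    (hp0 : ∀ i c, 0 ≤ p i c) (hp1 : ∀ i, ∑ c, p i c = 1)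
    (hv0 : ∀ i c, 0 ≤ v i c) (hpv : ∑ i, ∑ c, p i c * v i c ≤ 1) :
    Real.sqrt (∑ i, ∑ c, (p i c * v i c - p i c * ∑ c', p i c' * v i c') ^ 2) ≤ 2 := by
  set S : I → ℝ := fun i => ∑ c, p i c * v i c with hS
  have hS0 : ∀ i, 0 ≤ S i := fun i =>
    Finset.sum_nonneg fun c _ => mul_nonneg (hp0 i c) (hv0 i c)
  have key : ∀ i, ∑ c, (p i c * v i c - p i c * S i) ^ 2 ≤ 4 * S i ^ 2 := by
    intro i
    have h1 : ∑ c, (p i c * v i c - p i c * S i) ^ 2 ≤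
        (∑ c, |p i c * v i c - p i c * S i|) ^ 2 := by
      calc ∑ c, (p i c * v i c - p i c * S i) ^ 2
          = ∑ c, |p i c * v i c - p i c * S i| ^ 2 := by
            simp [sq_abs]
        _ ≤ (∑ c, |p i c * v i c - p i c * S i|) ^ 2 :=
            Finset.sum_sq_le_sq_sum_of_nonneg fun c _ => abs_nonneg _
    have h2 : ∑ c, |p i c * v i c - p i c * S i| ≤ 2 * S i := by
      have : ∀ c, |p i c * v i c - p i c * S i| ≤ p i c * v i c + p i c * S i := by
        intro c
        refine (abs_sub _ _).trans ?_
        rw [abs_of_nonneg (mul_nonneg (hp0 i c) (hv0 i c)),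
          abs_of_nonneg (mul_nonneg (hp0 i c) (hS0 i))]
      calc ∑ c, |p i c * v i c - p i c * S i|
          ≤ ∑ c, (p i c * v i c + p i c * S i) :=
            Finset.sum_le_sum fun c _ => this c
        _ = S i + (∑ c, p i c) * S i := by
            rw [Finset.sum_add_distrib, ← Finset.sum_mul]
        _ = 2 * S i := by rw [hp1 i]; ring
    calc ∑ c, (p i c * v i c - p i c * S i) ^ 2
        ≤ (∑ c, |p i c * v i c - p i c * S i|) ^ 2 := h1
      _ ≤ (2 * S i) ^ 2 := by
          apply pow_le_pow_left₀ (Finset.sum_nonneg fun c _ => abs_nonneg _) h2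
      _ = 4 * S i ^ 2 := by ring
  have total : ∑ i, ∑ c, (p i c * v i c - p i c * S i) ^ 2 ≤ 4 := by
    calc ∑ i, ∑ c, (p i c * v i c - p i c * S i) ^ 2
        ≤ ∑ i, 4 * S i ^ 2 := Finset.sum_le_sum fun i _ => key i
      _ = 4 * ∑ i, S i ^ 2 := by rw [Finset.mul_sum]
      _ ≤ 4 * (∑ i, S i) ^ 2 := by
          have := Finset.sum_sq_le_sq_sum_of_nonneg
            (s := Finset.univ) (f := S) (fun i _ => hS0 i)
          linarith
      _ ≤ 4 * 1 := by
          have h1 : (∑ i, S i) ^ 2 ≤ 1 := by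
            have := hS0
            have hs : 0 ≤ ∑ i, S i := Finset.sum_nonneg fun i _ => hS0 i
            nlinarith [hpv]
          linarith
      _ = 4 := by ring
  calc Real.sqrt (∑ i, ∑ c, (p i c * v i c - p i c * S i) ^ 2)
      ≤ Real.sqrt 4 := Real.sqrt_le_sqrt total
    _ = 2 := by
        rw [show (4:ℝ) = 2 ^ 2 by norm_num, Real.sqrt_sq (by norm_num)]
end
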